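/- A gate-input stuck-at fault is detected (signals an error) under an input word if and only if the gate-output stuck-at fault it manifests as (when it inverts the gate's output on that input word) signals an error under that input word; consequently, if an input fault never manifests as an error-signalling output fault on any input word, the circuit is not self-testing for that input fault. -/

import Mathlib

/-- An error is signalled iff the dual-rail outputs satisfy `z0 = z1`. -/
def errSig {Out : Type} (w : Out × (Bool × Bool)) : Prop := w.2.1 = w.2.2

theorem iff_eq_and_of_not_of_eq_or_eq {α : Type*} {p : α → Prop} {a b c : α}
    (hb : ¬ p b) (h : a = b ∨ a = c) : p a ↔ a = c ∧ p c := by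
  constructor
  · intro ha
    rcases h with rfl | hac
    · exact absurd ha hb
    · exact ⟨hac, hac ▸ ha⟩
  · rintro ⟨rfl, hc⟩
    exact hc

/-- A gate-input stuck-at fault signals an error under an input word iff the
gate-output stuck-at fault it manifests as (when it inverts the gate's output
on that word) signals an error under that word; consequently, if the input
fault never manifests as an error-signalling output fault, the circuit is not
self-testing for that input fault. -/
theorem stmt_14 {ι Out : Type}
    (good : ι → Out × (Bool × Bool))        -- fault-free behaviour
    (faultyIn : ι → Out × (Bool × Bool))    -- behaviour under the gate-input fault
    (faultyOut : ι → Out × (Bool × Bool))   -- behaviour under the corresponding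
                                            -- gate-output fault
    -- fault-free operation never signals an error
    (h_good : ∀ x, ¬ errSig (good x))
    -- on each input word the input fault either leaves the circuit output
    -- unchanged or manifests itself exactly as the gate-output fault
    (h_case : ∀ x, faultyIn x = good x ∨ faultyIn x = faultyOut x) :
    -- the input fault is detected under `x` iff it manifests as the output
    -- fault and that output fault signals an error under `x`
    (∀ x, errSig (faultyIn x) ↔ (faultyIn x = faultyOut x ∧ errSig (faultyOut x))) ∧
    -- consequence: if the input fault never manifests as an error-signalling
    -- output fault, the circuit is not self-testing for it
    ((∀ x, ¬ (faultyIn x = faultyOut x ∧ errSig (faultyOut x))) →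
      ¬ ∃ x, errSig (faultyIn x)) := by
  have detected_iff x := iff_eq_and_of_not_of_eq_or_eq (h_good x) (h_case x)
  exact ⟨detected_iff, fun never ⟨x, hx⟩ => never x ((detected_iff x).mp hx)⟩
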